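/- arXiv:2004.11578 — 4 statements merged into one kernel-verified Lean document; each statement's English description precedes it below -/
import Mathlib

section
/- Let f_1,…,f_k : ℝⁿ → ℝ each be differentiable at x ∈ ℝⁿ. If x is Pareto optimal, then 0 ∈ conv{∇f_1(x),…,∇f_k(x)}, the convex hull of the gradients of the objective functions at x. -/
/-!
If `0` is not in the convex hull of the finitely many gradients, a separating hyperplane gives a
direction `v` with `⟪∇f_i(x), v⟫ < 0` for every `i`. Then `v` is a common descent direction:
moving a little from `x` along `v` strictly decreases every objective, so `x` is not Pareto optimal.
-/

open Filter Topology RealInnerProductSpace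

theorem HasLineDerivAt.eventually_lt_of_neg {E : Type*} [AddCommGroup E] [Module ℝ E]
    {f : E → ℝ} {x v : E} {d : ℝ} (hf : HasLineDerivAt ℝ f d x v) (hd : d < 0) :
    ∀ᶠ t in 𝓝[>] (0 : ℝ), f (x + t • v) < f x := by
  have hslope : ∀ᶠ t in 𝓝[>] (0 : ℝ), slope (fun t : ℝ ↦ f (x + t • v)) 0 t < 0 :=
    hf.hasDerivWithinAt.limsup_slope_le' Set.self_notMem_Ioi hd
  filter_upwards [hslope, self_mem_nhdsWithin] with t ht (htpos : 0 < t)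
  simpa using (slope_neg_iff_of_le htpos.le).1 ht

theorem exists_forall_lt_of_fderiv_neg {ι E : Type*} [Finite ι] [NormedAddCommGroup E]
    [NormedSpace ℝ E] {f : ι → E → ℝ} {f' : ι → StrongDual ℝ E} {x v : E}
    (hf : ∀ i, HasFDerivAt (f i) (f' i) x) (hv : ∀ i, f' i v < 0) :
    ∃ y, ∀ i, f i y < f i x := by
  have hdescent : ∀ᶠ t in 𝓝[>] (0 : ℝ), ∀ i, f i (x + t • v) < f i x :=
    eventually_all.2 fun i ↦ ((hf i).hasLineDerivAt v).eventually_lt_of_neg (hv i)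
  obtain ⟨t, ht⟩ := hdescent.exists
  exact ⟨x + t • v, ht⟩

theorem Set.Finite.exists_strongDual_neg_of_zero_notMem_convexHull {E : Type*}
    [AddCommGroup E] [Module ℝ E] [TopologicalSpace E] [IsTopologicalAddGroup E]
    [ContinuousSMul ℝ E] [LocallyConvexSpace ℝ E] [T2Space E] {s : Set E} (hs : s.Finite)
    (h0 : (0 : E) ∉ convexHull ℝ s) : ∃ F : StrongDual ℝ E, ∀ a ∈ s, F a < 0 := by
  obtain ⟨F, u, hFu, hu⟩ := geometric_hahn_banach_closed_point (convex_convexHull ℝ s)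
    (hs.isCompact_convexHull ℝ).isClosed h0
  rw [map_zero] at hu
  exact ⟨F, fun a ha ↦ (hFu a (subset_convexHull ℝ s ha)).trans hu⟩

theorem Set.Finite.exists_inner_neg_of_zero_notMem_convexHull {E : Type*}
    [NormedAddCommGroup E] [InnerProductSpace ℝ E] [CompleteSpace E] {s : Set E}
    (hs : s.Finite) (h0 : (0 : E) ∉ convexHull ℝ s) : ∃ v : E, ∀ a ∈ s, ⟪a, v⟫ < 0 := by
  obtain ⟨F, hF⟩ := hs.exists_strongDual_neg_of_zero_notMem_convexHull h0
  refine ⟨(InnerProductSpace.toDual ℝ E).symm F, fun a ha ↦ ?_⟩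
  rw [real_inner_comm, InnerProductSpace.toDual_symm_apply]
  exact hF a ha

/-- if `x` is Pareto optimal for differentiable objectives `f_1,…,f_k`,
then `0` lies in the convex hull of the gradients at `x`. -/
theorem pareto_optimal_zero_mem_convexHull_gradients {n k : ℕ} (hk : 0 < k)
    (f : Fin k → EuclideanSpace ℝ (Fin n) → ℝ) (x : EuclideanSpace ℝ (Fin n))
    (hdiff : ∀ i, DifferentiableAt ℝ (f i) x)
    (hpareto : ¬ ∃ y : EuclideanSpace ℝ (Fin n),
      (∀ i, f i y ≤ f i x) ∧ (∃ j, f j y < f j x)) :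
    (0 : EuclideanSpace ℝ (Fin n)) ∈
      convexHull ℝ (Set.range fun i => gradient (f i) x) := by
  by_contra h0
  obtain ⟨v, hv⟩ := (Set.finite_range _).exists_inner_neg_of_zero_notMem_convexHull h0
  have hdescent : ∀ i, fderiv ℝ (f i) x v < 0 := fun i ↦ by
    rw [← inner_gradient_left]
    exact hv _ ⟨i, rfl⟩
  obtain ⟨y, hy⟩ := exists_forall_lt_of_fderiv_neg (fun i ↦ (hdiff i).hasFDerivAt) hdescent
  exact hpareto ⟨y, fun i ↦ (hy i).le, ⟨0, hk⟩, hy ⟨0, hk⟩⟩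
end

section
/- Let f_1,…,f_k : ℝⁿ → ℝ be continuously differentiable, x ∈ ℝⁿ, ε ≥ 0, and let v̄ be an element of minimal Euclidean norm in −F_ε(x) := {−w : w ∈ F_ε(x)}. Then either v̄ ≠ 0 and ⟨v̄, ξ⟩ ≤ −‖v̄‖² < 0 for all ξ ∈ F_ε(x), or v̄ = 0 and there is no v ∈ ℝⁿ with ⟨v, ξ⟩ < 0 for all ξ ∈ F_ε(x). -/
/-- The Goldstein-type set `F_ε(x)` for continuously differentiable objectives:
the convex hull of all gradients of all objectives over the closed `ε`-ball around `x`. -/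
noncomputable def Feps {n k : ℕ} (f : Fin k → EuclideanSpace ℝ (Fin n) → ℝ)
    (x : EuclideanSpace ℝ (Fin n)) (ε : ℝ) : Set (EuclideanSpace ℝ (Fin n)) :=
  convexHull ℝ (⋃ i, (fun y => gradient (f i) y) '' Metric.closedBall x ε)

/-! The minimal-norm element `v` of a convex set `K` is the projection of `0` onto `K`, so the
obtuse-angle characterization of projections gives `⟪v, w - v⟫ ≥ 0` for `w ∈ K`. Applied to
`K = -F_ε(x)` this is the descent inequality; if `v = 0` then `0 ∈ F_ε(x)`, and no `v` can make
`⟪v, 0⟫` negative. -/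

open RealInnerProductSpace

theorem norm_sq_le_inner_of_forall_norm_le {E : Type*} [NormedAddCommGroup E]
    [InnerProductSpace ℝ E] {K : Set E} (hK : Convex ℝ K) {v : E} (hv : v ∈ K)
    (hmin : ∀ w ∈ K, ‖v‖ ≤ ‖w‖) {w : E} (hw : w ∈ K) : ‖v‖ ^ 2 ≤ ⟪v, w⟫ := by
  have : Nonempty K := ⟨⟨v, hv⟩⟩
  have hproj : ‖0 - v‖ = ⨅ u : K, ‖0 - (u : E)‖ := by
    simp only [zero_sub, norm_neg]
    exact le_antisymm (le_ciInf fun u => hmin u u.2)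
      (ciInf_le (f := fun u : K => ‖(u : E)‖) ⟨0, fun _ ⟨_, h⟩ => h ▸ norm_nonneg _⟩ ⟨v, hv⟩)
  have h := (norm_eq_iInf_iff_real_inner_le_zero hK hv).1 hproj w hw
  rw [zero_sub, inner_neg_left, inner_sub_right, real_inner_self_eq_norm_sq] at h
  linarith

theorem min_norm_Feps_descent_general {n k : ℕ}
    (f : Fin k → EuclideanSpace ℝ (Fin n) → ℝ)
    (x : EuclideanSpace ℝ (Fin n)) (ε : ℝ)
    (vbar : EuclideanSpace ℝ (Fin n)) (hvmem : vbar ∈ -(Feps f x ε))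
    (hvmin : ∀ w ∈ -(Feps f x ε), ‖vbar‖ ≤ ‖w‖) :
    (vbar ≠ 0 ∧ (∀ ξ ∈ Feps f x ε, (inner ℝ vbar ξ : ℝ) ≤ -‖vbar‖ ^ 2) ∧ -‖vbar‖ ^ 2 < (0 : ℝ)) ∨
    (vbar = 0 ∧ ¬ ∃ v : EuclideanSpace ℝ (Fin n), ∀ ξ ∈ Feps f x ε, (inner ℝ v ξ : ℝ) < 0) := by
  by_cases hv0 : vbar = 0
  · subst hv0
    have h0 : (0 : EuclideanSpace ℝ (Fin n)) ∈ Feps f x ε := by simpa using hvmem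
    exact Or.inr ⟨rfl, fun ⟨v, hv⟩ => (hv 0 h0).ne (inner_zero_right v)⟩
  · have hconv : Convex ℝ (-(Feps f x ε)) := (convex_convexHull ℝ _).neg
    refine Or.inl ⟨hv0, fun ξ hξ => ?_, neg_neg_of_pos (by positivity)⟩
    have h := norm_sq_le_inner_of_forall_norm_le hconv hvmem hvmin (w := -ξ) (by simpa using hξ)
    rw [inner_neg_right] at h
    linarith

/-- the minimal-norm element `v̄` of `-F_ε(x)` is either nonzero with
`⟨v̄, ξ⟩ ≤ -‖v̄‖² < 0` for all `ξ ∈ F_ε(x)`, or zero and no common descent direction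
for `F_ε(x)` exists. -/
theorem min_norm_Feps_descent {n k : ℕ}
    (f : Fin k → EuclideanSpace ℝ (Fin n) → ℝ) (hf : ∀ i, ContDiff ℝ 1 (f i))
    (x : EuclideanSpace ℝ (Fin n)) (ε : ℝ) (hε : 0 ≤ ε)
    (vbar : EuclideanSpace ℝ (Fin n)) (hvmem : vbar ∈ -(Feps f x ε))
    (hvmin : ∀ w ∈ -(Feps f x ε), ‖vbar‖ ≤ ‖w‖) :
    (vbar ≠ 0 ∧ (∀ ξ ∈ Feps f x ε, (inner ℝ vbar ξ : ℝ) ≤ -‖vbar‖ ^ 2) ∧ -‖vbar‖ ^ 2 < (0 : ℝ)) ∨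
    (vbar = 0 ∧ ¬ ∃ v : EuclideanSpace ℝ (Fin n), ∀ ξ ∈ Feps f x ε, (inner ℝ v ξ : ℝ) < 0) :=
  min_norm_Feps_descent_general f x ε vbar hvmem hvmin
end

section
/- Let c ∈ (0,1), δ > 0, L > 0 and v, ξ ∈ ℝⁿ with δ < ‖v‖ ≤ L, ‖ξ‖ ≤ L and ⟨v, ξ⟩ > −c ‖v‖². Then s := (1−c)‖v‖²/(4L²) satisfies s ∈ (0,1) and ‖−v + s(ξ + v)‖² < (1 − ((1−c)δ/(2L))²) ‖v‖². In particular, the convex combination (1−s)(−v) + s ξ of −v and ξ has strictly smaller norm than v by a factor depending only on c, δ and L. -/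
/-- quantitative norm decrease for the convex combination
`-v + s(ξ + v) = (1-s)(-v) + s ξ` with `s = (1-c)‖v‖²/(4L²)`. -/
theorem norm_decrease_convex_combination {n : ℕ} (c δ L : ℝ)
    (hc : c ∈ Set.Ioo (0 : ℝ) 1) (hδ : 0 < δ) (hL : 0 < L)
    (v ξ : EuclideanSpace ℝ (Fin n)) (hδv : δ < ‖v‖) (hvL : ‖v‖ ≤ L) (hξL : ‖ξ‖ ≤ L)
    (hip : (inner ℝ v ξ : ℝ) > -c * ‖v‖ ^ 2) :
    ((1 - c) * ‖v‖ ^ 2 / (4 * L ^ 2)) ∈ Set.Ioo (0 : ℝ) 1 ∧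
    ‖-v + ((1 - c) * ‖v‖ ^ 2 / (4 * L ^ 2)) • (ξ + v)‖ ^ 2 <
      (1 - ((1 - c) * δ / (2 * L)) ^ 2) * ‖v‖ ^ 2 := by
  obtain ⟨hc0, hc1⟩ := hc
  set s : ℝ := (1 - c) * ‖v‖ ^ 2 / (4 * L ^ 2) with hs
  have hv0 : 0 < ‖v‖ := lt_trans hδ hδv
  have hL2 : 0 < 4 * L ^ 2 := by positivity
  have hs0 : 0 < s := by
    apply div_pos _ hL2
    have : (0:ℝ) < 1 - c := by linarith
    positivity
  have hs1 : s < 1 := by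
    rw [hs, div_lt_one hL2]
    nlinarith [sq_nonneg ‖v‖]
  refine ⟨⟨hs0, hs1⟩, ?_⟩
  have hexp : ‖-v + s • (ξ + v)‖ ^ 2 =
      ‖v‖ ^ 2 - 2 * s * (inner ℝ v (ξ + v) : ℝ) + s ^ 2 * ‖ξ + v‖ ^ 2 := by
    rw [norm_add_sq_real, norm_neg, norm_smul, inner_neg_left, inner_smul_right]
    simp [mul_pow]
    ring
  have hinner : (inner ℝ v (ξ + v) : ℝ) = (inner ℝ v ξ : ℝ) + ‖v‖ ^ 2 := by
    rw [inner_add_right, real_inner_self_eq_norm_sq]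
  have hnorm : ‖ξ + v‖ ≤ 2 * L := by
    calc ‖ξ + v‖ ≤ ‖ξ‖ + ‖v‖ := norm_add_le _ _
      _ ≤ 2 * L := by linarith
  have hnorm2 : ‖ξ + v‖ ^ 2 ≤ 4 * L ^ 2 := by nlinarith [norm_nonneg (ξ + v)]
  have hsL : s ^ 2 * ‖ξ + v‖ ^ 2 ≤ s * ((1 - c) * ‖v‖ ^ 2) := by
    have : s * (4 * L ^ 2) = (1 - c) * ‖v‖ ^ 2 := by
      rw [hs, div_mul_cancel₀ _ (ne_of_gt hL2)]
    nlinarith [sq_nonneg s]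
  have hδL : ((1 - c) * δ / (2 * L)) ^ 2 < (1 - c) * s := by
    rw [hs]
    rw [div_pow, div_lt_iff₀ (by positivity : (0:ℝ) < (2*L)^2)]
    have h1c : (0:ℝ) < 1 - c := by linarith
    have hδ2 : δ ^ 2 < ‖v‖ ^ 2 := by nlinarith
    have : (1 - c) * ((1 - c) * ‖v‖ ^ 2 / (4 * L ^ 2)) * (2 * L) ^ 2
        = (1-c)^2 * ‖v‖^2 := by field_simp; ring
    rw [this]
    nlinarith [mul_pos h1c h1c]
  have h1 : 2 * s * ((inner ℝ v ξ : ℝ) + ‖v‖ ^ 2) > 2 * s * ((1 - c) * ‖v‖ ^ 2) := by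
    nlinarith
  have h2 : ((1 - c) * δ / (2 * L)) ^ 2 * ‖v‖ ^ 2 < (1 - c) * s * ‖v‖ ^ 2 :=
    mul_lt_mul_of_pos_right hδL (by positivity)
  have h3 : (1 - ((1 - c) * δ / (2 * L)) ^ 2) * ‖v‖ ^ 2
      = ‖v‖ ^ 2 - ((1 - c) * δ / (2 * L)) ^ 2 * ‖v‖ ^ 2 := by ring
  rw [hexp, hinner, h3]
  clear_value s
  linarith [hsL, h1, h2]
end

section
/- Let c ∈ (0,1), δ > 0, L > 0, and let W ⊆ ℝⁿ be nonempty, convex, compact and contained in the closed ball of radius L around the origin. Let v̄ be an element of minimal Euclidean norm in −W := {−w : w ∈ W} and assume ‖v̄‖ > δ. Let ξ ∈ ℝⁿ with ‖ξ‖ ≤ L and ⟨v̄, ξ⟩ > −c ‖v̄‖². Then every element v' of minimal norm in −conv(W ∪ {ξ}) satisfies ‖v'‖² < (1 − ((1−c)δ/(2L))²) ‖v̄‖². -/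
/-! The point `v̄` and the vertex `-ξ` both lie in `-conv(W ∪ {ξ})`, and moving from `v̄` towards `-ξ`
decreases the norm at rate `⟪v̄, v̄ + ξ⟫ = ‖v̄‖² + ⟪v̄, ξ⟫ > (1 - c)‖v̄‖²`. Since `‖v̄ + ξ‖ ≤ 2L`, the
optimal step along this segment lowers `‖·‖²` by at least `⟪v̄, v̄ + ξ⟫² / (2L)²`, and the minimal norm
element `v'` does at least as well. -/

open RealInnerProductSpace

section SegmentDescent

variable {E : Type*} [NormedAddCommGroup E] [InnerProductSpace ℝ E]

theorem norm_sub_smul_sq (u y : E) (t : ℝ) :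
    ‖u - t • y‖ ^ 2 = ‖u‖ ^ 2 - 2 * t * ⟪u, y⟫ + t ^ 2 * ‖y‖ ^ 2 := by
  rw [norm_sub_sq_real, real_inner_smul_right, norm_smul, mul_pow, Real.norm_eq_abs, sq_abs]
  ring

/-- The step `t = ⟪u, u - x⟫ / (2R)²` from `u` towards `x` stays in the segment because
`⟪u, u - x⟫ ≤ ‖u‖ ‖u - x‖ ≤ R · 2R`. -/
theorem exists_mem_segment_sq_norm_le {u x : E} {R : ℝ} (hu : ‖u‖ ≤ R) (hx : ‖x‖ ≤ R)
    (hA : 0 < ⟪u, u - x⟫) :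
    ∃ p ∈ segment ℝ u x, ‖p‖ ^ 2 ≤ ‖u‖ ^ 2 - ⟪u, u - x⟫ ^ 2 / (2 * R) ^ 2 := by
  set A := ⟪u, u - x⟫
  have hux : ‖u - x‖ ≤ 2 * R := (norm_sub_le u x).trans (by linarith)
  have hR : 0 ≤ R := (norm_nonneg u).trans hu
  have hAD : A ≤ (2 * R) ^ 2 :=
    calc A ≤ ‖u‖ * ‖u - x‖ := real_inner_le_norm _ _
      _ ≤ R * (2 * R) := by gcongr
      _ ≤ (2 * R) ^ 2 := by nlinarith
  have hD : 0 < (2 * R) ^ 2 := hA.trans_le hAD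
  set t := A / (2 * R) ^ 2 with ht
  have ht0 : 0 ≤ t := div_nonneg hA.le hD.le
  have ht1 : t ≤ 1 := (div_le_one hD).2 hAD
  refine ⟨u - t • (u - x), ⟨1 - t, t, by linarith, ht0, by ring, by module⟩, ?_⟩
  calc ‖u - t • (u - x)‖ ^ 2 = ‖u‖ ^ 2 - 2 * t * A + t ^ 2 * ‖u - x‖ ^ 2 :=
        norm_sub_smul_sq u (u - x) t
    _ ≤ ‖u‖ ^ 2 - 2 * t * A + t ^ 2 * (2 * R) ^ 2 := by gcongr
    _ = ‖u‖ ^ 2 - A ^ 2 / (2 * R) ^ 2 := by rw [ht]; field_simp; ring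

end SegmentDescent

theorem min_norm_decrease_enriched_hull_general {n : ℕ} (c δ L : ℝ)
    (hc : c ∈ Set.Ioo (0 : ℝ) 1) (hδ : 0 < δ)
    (W : Set (EuclideanSpace ℝ (Fin n))) (hWL : W ⊆ Metric.closedBall 0 L)
    (vbar : EuclideanSpace ℝ (Fin n)) (hvmem : vbar ∈ -W)
    (hvδ : δ < ‖vbar‖)
    (ξ : EuclideanSpace ℝ (Fin n)) (hξL : ‖ξ‖ ≤ L)
    (hip : (inner ℝ vbar ξ : ℝ) > -c * ‖vbar‖ ^ 2) :
    ∀ v' ∈ -(convexHull ℝ (W ∪ {ξ})),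
      (∀ w ∈ -(convexHull ℝ (W ∪ {ξ})), ‖v'‖ ≤ ‖w‖) →
      ‖v'‖ ^ 2 < (1 - ((1 - c) * δ / (2 * L)) ^ 2) * ‖vbar‖ ^ 2 := by
  intro v' _ hv'min
  have hvW : -vbar ∈ W := hvmem
  have hvL : ‖vbar‖ ≤ L := by simpa using hWL hvW
  have hseg : segment ℝ vbar (-ξ) ⊆ -convexHull ℝ (W ∪ {ξ}) :=
    (convex_convexHull ℝ _).neg.segment_subset (subset_convexHull ℝ _ (Or.inl hvW))
      (Set.neg_mem_neg.2 (subset_convexHull ℝ _ (Or.inr rfl)))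
  have hrate : (1 - c) * δ * ‖vbar‖ < ⟪vbar, vbar - -ξ⟫ := by
    rw [sub_neg_eq_add, inner_add_right, real_inner_self_eq_norm_sq]
    nlinarith [mul_pos (sub_pos.2 hc.2) (mul_pos (hδ.trans hvδ) (sub_pos.2 hvδ))]
  have hrate_pos : 0 < (1 - c) * δ * ‖vbar‖ :=
    mul_pos (mul_pos (sub_pos.2 hc.2) hδ) (hδ.trans hvδ)
  obtain ⟨p, hp, hpnorm⟩ :=
    exists_mem_segment_sq_norm_le hvL (by rwa [norm_neg]) (hrate_pos.trans hrate)
  have hL : 0 < L := (hδ.trans hvδ).trans_le hvL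
  calc ‖v'‖ ^ 2 ≤ ‖p‖ ^ 2 := pow_le_pow_left₀ (norm_nonneg _) (hv'min p (hseg hp)) 2
    _ ≤ ‖vbar‖ ^ 2 - ⟪vbar, vbar - -ξ⟫ ^ 2 / (2 * L) ^ 2 := hpnorm
    _ < ‖vbar‖ ^ 2 - ((1 - c) * δ * ‖vbar‖) ^ 2 / (2 * L) ^ 2 := by gcongr
    _ = (1 - ((1 - c) * δ / (2 * L)) ^ 2) * ‖vbar‖ ^ 2 := by field_simp

/-- adding a violating vector `ξ` to `W` strictly decreases the
minimal norm of the negative convex hull by a uniform factor. -/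
theorem min_norm_decrease_enriched_hull {n : ℕ} (c δ L : ℝ)
    (hc : c ∈ Set.Ioo (0 : ℝ) 1) (hδ : 0 < δ) (hL : 0 < L)
    (W : Set (EuclideanSpace ℝ (Fin n))) (hWne : W.Nonempty) (hWconv : Convex ℝ W)
    (hWcomp : IsCompact W) (hWL : W ⊆ Metric.closedBall 0 L)
    (vbar : EuclideanSpace ℝ (Fin n)) (hvmem : vbar ∈ -W)
    (hvmin : ∀ w ∈ -W, ‖vbar‖ ≤ ‖w‖) (hvδ : δ < ‖vbar‖)
    (ξ : EuclideanSpace ℝ (Fin n)) (hξL : ‖ξ‖ ≤ L)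
    (hip : (inner ℝ vbar ξ : ℝ) > -c * ‖vbar‖ ^ 2) :
    ∀ v' ∈ -(convexHull ℝ (W ∪ {ξ})),
      (∀ w ∈ -(convexHull ℝ (W ∪ {ξ})), ‖v'‖ ≤ ‖w‖) →
      ‖v'‖ ^ 2 < (1 - ((1 - c) * δ / (2 * L)) ^ 2) * ‖vbar‖ ^ 2 :=
  min_norm_decrease_enriched_hull_general c δ L hc hδ W hWL vbar hvmem hvδ ξ hξL hip
end
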